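/- arXiv:1501.07361 — 2 statements merged into one kernel-verified Lean document; each statement's English description precedes it below -/
import Mathlib

section
/- Let (x_k)_{k∈ℕ} be a sequence of points of ℝ^j and (ζ_k)_{k∈ℕ} a sequence of nonnegative real numbers such that x_k converges to some x ∈ S and ζ_k (x_k − P_S(x_k)) converges to some x' ∈ ℝ^j as k → +∞. Then x' ∈ O_S[x], that is, ⟨x', x'' − x⟩ ≤ 0 for every x'' ∈ S. -/
open Set Filter
open scoped RealInnerProductSpace Topology

noncomputable section

/-- `ℝ^j` with its Euclidean inner product. -/
abbrev Vec (j : ℕ) : Type := EuclideanSpace ℝ (Fin j)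

/-- Limit of scaled differences to the projection belongs to the orthogonal of `S`
at the limit point (Lemma 2.1). -/
theorem limit_in_orthogonal_of_convex
    {j : ℕ} (hj : 0 < j)
    (S : Set (Vec j)) (hSne : S.Nonempty) (hScl : IsClosed S) (hScv : Convex ℝ S)
    (P : Vec j → Vec j)
    (hP : ∀ x : Vec j, P x ∈ S ∧ ‖x - P x‖ = Metric.infDist x S)
    (xs : ℕ → Vec j) (ζ : ℕ → ℝ) (hζ : ∀ k, 0 ≤ ζ k)
    (x : Vec j) (hx : x ∈ S)
    (x' : Vec j)
    (hxs : Tendsto xs atTop (𝓝 x))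
    (hconv : Tendsto (fun k => ζ k • (xs k - P (xs k))) atTop (𝓝 x')) :
    ∀ x'' ∈ S, ⟪x', x'' - x⟫ ≤ 0 := by
  intro x'' hx''
  -- variational inequality at each k
  have hvar : ∀ k, ⟪xs k - P (xs k), x'' - P (xs k)⟫ ≤ 0 := by
    intro k
    have hinf : ‖xs k - P (xs k)‖ = ⨅ w : S, ‖xs k - w‖ := by
      rw [(hP (xs k)).2, Metric.infDist_eq_iInf]
      simp [dist_eq_norm]
    exact (norm_eq_iInf_iff_real_inner_le_zero hScv (hP (xs k)).1).mp hinf x'' hx''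
  -- xs k - P (xs k) → 0
  have hdiff0 : Tendsto (fun k => xs k - P (xs k)) atTop (𝓝 0) := by
    refine squeeze_zero_norm (a := fun k => ‖xs k - x‖) (fun k => ?_) ?_
    · rw [(hP (xs k)).2]
      calc Metric.infDist (xs k) S ≤ dist (xs k) x := Metric.infDist_le_dist_of_mem hx
        _ = ‖xs k - x‖ := dist_eq_norm _ _
    · have := (hxs.sub (tendsto_const_nhds (x := x))).norm
      simpa using this
  -- P (xs k) → x
  have hPx : Tendsto (fun k => P (xs k)) atTop (𝓝 x) := by
    have : Tendsto (fun k => xs k - (xs k - P (xs k))) atTop (𝓝 (x - 0)) :=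
      hxs.sub hdiff0
    simpa using this
  -- inner products converge
  have hinner : Tendsto (fun k => ⟪ζ k • (xs k - P (xs k)), x'' - P (xs k)⟫) atTop
      (𝓝 ⟪x', x'' - x⟫) :=
    hconv.inner (tendsto_const_nhds.sub hPx)
  refine le_of_tendsto hinner (Eventually.of_forall fun k => ?_)
  rw [real_inner_smul_left]
  exact mul_nonpos_of_nonneg_of_nonpos (hζ k) (hvar k)

end
end

section
/- The squared distance function d_S² : ℝ^j → ℝ, x ↦ (inf_{y∈S} ‖x − y‖)², is Fréchet differentiable at every point x ∈ ℝ^j, and its differential at x is the linear map x' ↦ 2 ⟨x − P_S(x), x'⟩. -/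
open Set
open scoped RealInnerProductSpace

noncomputable section

lemma var_ineq {j : ℕ} {S : Set (Vec j)} (hScv : Convex ℝ S)
    {z p : Vec j} (hp : p ∈ S) (hd : ‖z - p‖ = Metric.infDist z S) :
    ∀ w ∈ S, ⟪z - p, w - p⟫ ≤ 0 := by
  have hne : S.Nonempty := ⟨p, hp⟩
  have : Nonempty S := hne.to_subtype
  have h : ‖z - p‖ = ⨅ w : S, ‖z - w‖ := by
    rw [hd, Metric.infDist_eq_iInf]
    simp [dist_eq_norm]
  exact (norm_eq_iInf_iff_real_inner_le_zero hScv hp).mp h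

/-- The squared distance function to a nonempty closed convex set is everywhere
Fréchet differentiable, with differential `x' ↦ 2⟨x − P_S(x), x'⟩` (Lemma 2.2). -/
theorem sq_dist_hasFDerivAt
    {j : ℕ} (hj : 0 < j)
    (S : Set (Vec j)) (hSne : S.Nonempty) (hScl : IsClosed S) (hScv : Convex ℝ S)
    (P : Vec j → Vec j)
    (hP : ∀ x : Vec j, P x ∈ S ∧ ‖x - P x‖ = Metric.infDist x S)
    (x : Vec j) :
    HasFDerivAt (fun y : Vec j => Metric.infDist y S ^ 2)
      ((2 : ℝ) • innerSL ℝ (x - P x)) x := by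
  have key : ∀ y : Vec j,
      |Metric.infDist y S ^ 2 - Metric.infDist x S ^ 2 - 2 * ⟪x - P x, y - x⟫|
        ≤ 5 * ‖y - x‖ ^ 2 := by
    intro y
    set a := P x
    set b := P y
    have hda : ‖x - a‖ = Metric.infDist x S := (hP x).2
    have hdb : ‖y - b‖ = Metric.infDist y S := (hP y).2
    have hdy0 : 0 ≤ Metric.infDist y S := Metric.infDist_nonneg
    -- upper bound
    have h1 : Metric.infDist y S ≤ ‖y - a‖ := by
      simpa [dist_eq_norm] using Metric.infDist_le_dist_of_mem (hP x).1
    have h1' : Metric.infDist y S ^ 2 ≤ ‖x - a‖ ^ 2 + 2 * ⟪x - a, y - x⟫ + ‖y - x‖ ^ 2 := by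
      have : ‖y - a‖ ^ 2 = ‖x - a‖ ^ 2 + 2 * ⟪x - a, y - x⟫ + ‖y - x‖ ^ 2 := by
        have e : y - a = (x - a) + (y - x) := by abel
        rw [e, norm_add_sq_real]
      nlinarith [norm_nonneg (y - a)]
    -- lower bound
    have h2 : Metric.infDist x S ≤ ‖x - b‖ := by
      simpa [dist_eq_norm] using Metric.infDist_le_dist_of_mem (hP y).1
    have h2' : Metric.infDist x S ^ 2 ≤ ‖y - b‖ ^ 2 - 2 * ⟪y - b, y - x⟫ + ‖y - x‖ ^ 2 := by
      have e : x - b = (y - b) + -(y - x) := by abel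
      have : ‖x - b‖ ^ 2 = ‖y - b‖ ^ 2 - 2 * ⟪y - b, y - x⟫ + ‖y - x‖ ^ 2 := by
        rw [e, norm_add_sq_real, inner_neg_right, norm_neg]
        ring
      nlinarith [norm_nonneg (x - b), Metric.infDist_nonneg (x := x) (s := S)]
    -- P is nonexpansive
    have hab : ‖b - a‖ ≤ ‖y - x‖ := by
      have hva : ⟪x - a, b - a⟫ ≤ 0 := var_ineq hScv (hP x).1 hda b (hP y).1
      have hvb : ⟪y - b, a - b⟫ ≤ 0 := var_ineq hScv (hP y).1 hdb a (hP x).1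
      have hsum : ⟪x - y, b - a⟫ + ‖b - a‖ ^ 2 ≤ 0 := by
        have e1 : (x - a) - (y - b) = (x - y) + (b - a) := by abel
        have e2 : ⟪(x - a) - (y - b), b - a⟫ ≤ 0 := by
          have : ⟪y - b, a - b⟫ = - ⟪y - b, b - a⟫ := by
            rw [show a - b = -(b - a) by abel, inner_neg_right]
          rw [inner_sub_left]
          linarith [hva, hvb, this]
        rw [e1, inner_add_left, real_inner_self_eq_norm_sq] at e2
        linarith
      have hle : ‖b - a‖ ^ 2 ≤ ⟪y - x, b - a⟫ := by
        have : ⟪x - y, b - a⟫ = - ⟪y - x, b - a⟫ := by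
          rw [show x - y = -(y - x) by abel, inner_neg_left]
        linarith
      have hcs : ⟪y - x, b - a⟫ ≤ ‖y - x‖ * ‖b - a‖ := real_inner_le_norm _ _
      nlinarith [norm_nonneg (b - a), norm_nonneg (y - x)]
    -- combine
    have hcs2 : |⟪(y - b) - (x - a), y - x⟫| ≤ ‖(y - b) - (x - a)‖ * ‖y - x‖ :=
      abs_real_inner_le_norm _ _
    have htri : ‖(y - b) - (x - a)‖ ≤ 2 * ‖y - x‖ := by
      have e : (y - b) - (x - a) = (y - x) - (b - a) := by abel
      calc ‖(y - b) - (x - a)‖ = ‖(y - x) - (b - a)‖ := by rw [e]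
        _ ≤ ‖y - x‖ + ‖b - a‖ := norm_sub_le _ _
        _ ≤ 2 * ‖y - x‖ := by linarith
    have hsplit : ⟪(y - b) - (x - a), y - x⟫ = ⟪y - b, y - x⟫ - ⟪x - a, y - x⟫ :=
      inner_sub_left _ _ _
    have hprod : ‖(y - b) - (x - a)‖ * ‖y - x‖ ≤ 2 * ‖y - x‖ * ‖y - x‖ := by
      have := mul_le_mul_of_nonneg_right htri (norm_nonneg (y - x))
      linarith
    have hsq : ‖y - x‖ ^ 2 = ‖y - x‖ * ‖y - x‖ := pow_two _
    have hl1 : -(2 * ‖y - x‖ * ‖y - x‖) ≤ ⟪y - b, y - x⟫ - ⟪x - a, y - x⟫ := by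
      have h := neg_abs_le (⟪(y - b) - (x - a), y - x⟫)
      rw [hsplit] at h hcs2
      linarith
    rw [← hda] at h2' ⊢
    rw [← hdb]
    rw [abs_le]
    constructor
    · linarith
    · nlinarith [norm_nonneg (y - x)]
  rw [hasFDerivAt_iff_isLittleO, Asymptotics.isLittleO_iff]
  intro c hc
  filter_upwards [Metric.ball_mem_nhds x (by positivity : (0:ℝ) < c / 5)] with y hy
  have hy' : ‖y - x‖ < c / 5 := by rwa [Metric.mem_ball, dist_eq_norm] at hy
  have hk := key y
  have hL : ((2 : ℝ) • innerSL ℝ (x - P x)) (y - x) = 2 * ⟪x - P x, y - x⟫ := by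
    rw [ContinuousLinearMap.smul_apply, innerSL_apply_apply, smul_eq_mul]
  rw [Real.norm_eq_abs, hL]
  calc |Metric.infDist y S ^ 2 - Metric.infDist x S ^ 2 - 2 * ⟪x - P x, y - x⟫|
      ≤ 5 * ‖y - x‖ ^ 2 := hk
    _ ≤ c * ‖y - x‖ := by nlinarith [norm_nonneg (y - x)]

end
end
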